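/- Let σ_1, ..., σ_n be (signed) Pauli operators on n qubits, where σ_i = (-1)^{u_i} i^{v_i} X(R^i) Z(T^i) with u_i, v_i ∈ Z_2 and R^i, T^i ∈ (Z_2)^n. For a ∈ (Z_2)^n define σ(a) = ∏_i σ_i^{a_i}. Then there exists a quadratic function q : (Z_2)^n → Z_2 such that σ(a)|0⟩^⊗n = (-1)^{q(a)} (∏_i i^{a_i v_i}) |Ra⟩, where R is the n×n matrix over Z_2 whose i-th column is R^i. -/

import Mathlib

/-- `X(x)` as a matrix indexed by bit strings. -/
def PauliX {n : ℕ} (x : Fin n → ZMod 2) :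
    Matrix (Fin n → ZMod 2) (Fin n → ZMod 2) ℂ :=
  Matrix.of fun y z => if y = z + x then 1 else 0

/-- `Z(z)` as a diagonal matrix with entries `(-1)^{z·y}`. -/
def PauliZ {n : ℕ} (z : Fin n → ZMod 2) :
    Matrix (Fin n → ZMod 2) (Fin n → ZMod 2) ℂ :=
  Matrix.diagonal fun y => (-1 : ℂ) ^ (∑ i, z i * y i).val

/-- The computational basis state `|x⟩`. -/
def ket {n : ℕ} (x : Fin n → ZMod 2) : (Fin n → ZMod 2) → ℂ :=
  fun y => if y = x then 1 else 0

/-- A quadratic function on `(Z_2)^n`. -/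
def IsQuadratic {n : ℕ} (q : (Fin n → ZMod 2) → ZMod 2) : Prop :=
  ∃ (c : Fin n → Fin n → ZMod 2) (d : Fin n → ZMod 2),
    ∀ x, q x = (∑ i, ∑ j, c i j * x i * x j) + ∑ i, d i * x i

/-!
Each factor `σ_i ^ a_i` sends a basis state `|w⟩` to `|w + a_i Rⁱ⟩` times the phase
`(-1)^{a_i (u_i + Tⁱ·w)} i^{a_i v_i}`. The factors act on `|0⟩` from the right, so `σ_i` meets the
state `|∑_{j > i} a_j Rʲ⟩`, and the signs collected multiply to `(-1)^{q(a)}` with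
`q(a) = ∑_i u_i a_i + ∑_{i < j} (Tⁱ·Rʲ) a_i a_j`.
-/

open Finset Matrix

lemma neg_one_pow_val_add {R : Type*} [Ring R] (a b : ZMod 2) :
    (-1 : R) ^ (a + b).val = (-1) ^ a.val * (-1) ^ b.val := by
  rw [ZMod.val_add, ← neg_one_pow_eq_pow_mod_two, pow_add]

lemma prod_neg_one_pow_val {R ι : Type*} [CommRing R] (s : Finset ι) (f : ι → ZMod 2) :
    ∏ i ∈ s, (-1 : R) ^ (f i).val = (-1) ^ (∑ i ∈ s, f i).val := by
  classical
  induction s using Finset.induction_on with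
  | empty => simp
  | insert i s hi ih => rw [prod_insert hi, sum_insert hi, ih, neg_one_pow_val_add]

section

variable {n : ℕ}

lemma pauliX_mulVec_ket (x w : Fin n → ZMod 2) : PauliX x *ᵥ ket w = ket (w + x) := by
  ext y
  simp only [mulVec, dotProduct, PauliX, of_apply, ket]
  rw [sum_eq_single w (fun b _ hb => by simp [hb]) (by simp)]
  simp

lemma pauliZ_mulVec_ket (z w : Fin n → ZMod 2) :
    PauliZ z *ᵥ ket w = (-1 : ℂ) ^ (z ⬝ᵥ w).val • ket w := by
  ext y
  by_cases h : y = w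
  · subst h; simp [PauliZ, mulVec_diagonal, ket, dotProduct]
  · simp [PauliZ, mulVec_diagonal, ket, h]

lemma signedPauli_pow_mulVec_ket (u v b : ZMod 2) (x z w : Fin n → ZMod 2) :
    (((-1 : ℂ) ^ u.val * Complex.I ^ v.val) • (PauliX x * PauliZ z)) ^ b.val *ᵥ ket w =
      ((-1 : ℂ) ^ (b * (u + z ⬝ᵥ w)).val * Complex.I ^ (b * v).val) • ket (w + b • x) := by
  rcases (by decide : ∀ b : ZMod 2, b = 0 ∨ b = 1) b with rfl | rfl
  · simp
  · rw [ZMod.val_one, pow_one, smul_mulVec, ← mulVec_mulVec, pauliZ_mulVec_ket, mulVec_smul,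
      pauliX_mulVec_ket, smul_smul, one_mul, one_mul, one_smul, neg_one_pow_val_add,
      mul_right_comm]

lemma ofFn_prod_mulVec_ket {m : ℕ} (M : Fin m → Matrix (Fin n → ZMod 2) (Fin n → ZMod 2) ℂ)
    (φ : Fin m → (Fin n → ZMod 2) → ℂ) (s : Fin m → Fin n → ZMod 2)
    (hM : ∀ i w, M i *ᵥ ket w = φ i w • ket (w + s i)) (w : Fin n → ZMod 2) :
    (List.ofFn M).prod *ᵥ ket w =
      (∏ i, φ i (w + ∑ j with i < j, s j)) • ket (w + ∑ i, s i) := by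
  induction m with
  | zero => simp
  | succ m ih =>
    rw [List.ofFn_succ, List.prod_cons, ← mulVec_mulVec,
      ih (fun i => M i.succ) (fun i => φ i.succ) (fun i => s i.succ) (fun i => hM i.succ),
      mulVec_smul, hM, smul_smul, Fin.prod_univ_succ, Fin.sum_univ_succ (f := s)]
    simp only [sum_filter, Fin.sum_univ_succ, Fin.succ_pos, Fin.succ_lt_succ_iff,
      Fin.not_lt_zero, if_true, if_false, zero_add, add_assoc, add_comm (s 0)]
    rw [mul_comm]

lemma isQuadratic_strictUpper (c : Fin n → Fin n → ZMod 2) (d : Fin n → ZMod 2) :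
    IsQuadratic fun a => ∑ i, a i * (d i + ∑ j with i < j, c i j * a j) := by
  refine ⟨fun i j => if i < j then c i j else 0, d, fun a => ?_⟩
  simp only [sum_filter, mul_add, sum_add_distrib, mul_sum, add_comm, ite_mul, zero_mul, mul_ite,
    mul_zero]
  congr 1
  · exact sum_congr rfl fun i _ => mul_comm _ _
  · exact sum_congr rfl fun i _ => sum_congr rfl fun j _ => by split_ifs <;> ring

end

/-- For signed Pauli operators `σ_i = (-1)^{u_i} i^{v_i} X(Rⁱ) Z(Tⁱ)` and
`σ(a) = ∏_i σ_i^{a_i}` (product in order of increasing `i`), there is a quadratic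
`q` with `σ(a)|0⟩^{⊗n} = (-1)^{q(a)} (∏_i i^{a_i v_i}) |Ra⟩`, where the `i`-th
column of `R` is `Rⁱ`. -/
theorem pauli_product_on_zero (n : ℕ)
    (u v : Fin n → ZMod 2) (Rc Tc : Fin n → Fin n → ZMod 2)
    (σ : Fin n → Matrix (Fin n → ZMod 2) (Fin n → ZMod 2) ℂ)
    (hσ : ∀ i, σ i = ((-1 : ℂ) ^ (u i).val * Complex.I ^ (v i).val) •
      (PauliX (Rc i) * PauliZ (Tc i)))
    (R : Matrix (Fin n) (Fin n) (ZMod 2))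
    (hRcol : ∀ r i, R r i = Rc i r) :
    ∃ q : (Fin n → ZMod 2) → ZMod 2, IsQuadratic q ∧
      ∀ a : Fin n → ZMod 2,
        (List.ofFn fun i => σ i ^ (a i).val).prod.mulVec (ket fun _ => 0) =
          ((-1 : ℂ) ^ (q a).val * ∏ i, Complex.I ^ (a i * v i).val) •
            ket (R.mulVec a) := by
  refine ⟨_, isQuadratic_strictUpper (fun i j => Tc i ⬝ᵥ Rc j) u, fun a => ?_⟩
  have hstep : ∀ i w, σ i ^ (a i).val *ᵥ ket w =
      ((-1 : ℂ) ^ (a i * (u i + Tc i ⬝ᵥ w)).val * Complex.I ^ (a i * v i).val) •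
        ket (w + a i • Rc i) := fun i w => by
    rw [hσ i, signedPauli_pow_mulVec_ket]
  have hRa : ∑ i, a i • Rc i = R *ᵥ a := by
    ext r
    simp [mulVec, dotProduct, hRcol, mul_comm]
  rw [← Pi.zero_def, ofFn_prod_mulVec_ket _ _ _ hstep, prod_mul_distrib, prod_neg_one_pow_val,
    zero_add, hRa]
  simp only [zero_add, dotProduct_sum, dotProduct_smul, smul_eq_mul, mul_comm (a _)]
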